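/- arXiv:1111.1352 — 5 statements merged into one kernel-verified Lean document; each statement's English description precedes it below -/
import Mathlib

section
/- The max-plus permanent of the adjacency matrix of a simple graph G equals the maximum cardinality of a subset S of the vertex set for which there exists a bijection φ: S → S (equivalently, an injection φ: S → V) with (v, φ(v)) an edge of G for all v ∈ S. More precisely: if t is the maximum size of a set of pairs (i_1,j_1),...,(i_t,j_t) with the i_k distinct, the j_k distinct, and each (i_k,j_k) an edge of G, then there exists such a maximum family with {i_1,...,i_t} = {j_1,...,j_t}. -/
/-- The max-plus permanent of the adjacency matrix of `G`. -/
def mpPerm (N : ℕ) (G : SimpleGraph (Fin N)) [DecidableRel G.Adj] : ℕ :=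
  Finset.univ.sup fun π : Equiv.Perm (Fin N) =>
    ∑ i, if G.Adj i (π i) then 1 else 0

/-- `P` is a term: a set of pairs which are all edges of `G`, with pairwise
distinct first coordinates and pairwise distinct second coordinates. -/
def IsTerm (N : ℕ) (G : SimpleGraph (Fin N)) (P : Finset (Fin N × Fin N)) : Prop :=
  (∀ p ∈ P, G.Adj p.1 p.2) ∧
    (P.image Prod.fst).card = P.card ∧ (P.image Prod.snd).card = P.card

/-!
Read a term `P` as a partial injection along edges of `G`, from its first projection `I` onto its
second projection `J`. A term extends to a permutation, which gives `mpPerm N G = t`.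
If a maximum term has `I ≠ J`, start at some `v ∈ I \ J` and follow `P` until the first vertex
outside `I`: this is a path `x 0 → x 1 → ⋯ → x k` of `G` with distinct vertices. Trading its `k`
pairs for the 2-cycles `x 0 ↔ x 1`, `x 2 ↔ x 3`, … on its first `2 ⌊(k + 1) / 2⌋` vertices gives
another term, so `k` is even by maximality; the new term is again maximum and `I \ J` lost `v`.
-/

open Finset

section PairFinset

variable {V : Type*} {P : Finset (V × V)}

lemma exists_perm_apply_fst_eq_snd (hfst : Set.InjOn Prod.fst (P : Set (V × V)))
    (hsnd : Set.InjOn Prod.snd (P : Set (V × V))) :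
    ∃ σ : Equiv.Perm V, ∀ p ∈ P, σ p.1 = p.2 := by
  obtain ⟨σ, hσ⟩ := Equiv.Perm.exists_extending_pair (fun p : P => p.1.1) (fun p : P => p.1.2)
    (fun p q h => Subtype.ext (hfst p.2 q.2 h)) (fun p q h => Subtype.ext (hsnd p.2 q.2 h))
  exact ⟨σ, fun p hp => hσ ⟨p, hp⟩⟩

variable [DecidableEq V]

structure IsMaximalChain (P : Finset (V × V)) (x : ℕ → V) (k : ℕ) : Prop where
  mem : ∀ n < k, (x n, x (n + 1)) ∈ P
  start : x 0 ∉ P.image Prod.snd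
  terminal : x k ∉ P.image Prod.fst

variable {x : ℕ → V} {k : ℕ}

lemma injOn_Iic_of_chain (hsnd : Set.InjOn Prod.snd (P : Set (V × V)))
    (hmem : ∀ n < k, (x n, x (n + 1)) ∈ P) (hstart : x 0 ∉ P.image Prod.snd) :
    Set.InjOn x (Set.Iic k) := by
  suffices h : ∀ a b, a < b → b ≤ k → x a ≠ x b by
    intro a ha b hb hab
    by_contra hne
    rcases lt_or_gt_of_ne hne with hlt | hlt
    · exact h a b hlt hb hab
    · exact h b a hlt ha hab.symm
  intro a
  induction a with
  | zero =>
    intro b hb hbk heq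
    obtain ⟨c, rfl⟩ : ∃ c, b = c + 1 := ⟨b - 1, by omega⟩
    exact hstart (mem_image.2 ⟨_, hmem c (by omega), heq.symm⟩)
  | succ a ih =>
    intro b hb hbk heq
    obtain ⟨c, rfl⟩ : ∃ c, b = c + 1 := ⟨b - 1, by omega⟩
    have hpair := hsnd (hmem a (by omega)) (hmem c (by omega)) heq
    exact ih c (by omega) (by omega) (congrArg Prod.fst hpair)

lemma IsMaximalChain.injOn (hsnd : Set.InjOn Prod.snd (P : Set (V × V)))
    (hc : IsMaximalChain P x k) : Set.InjOn x (Set.Iic k) :=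
  injOn_Iic_of_chain hsnd hc.mem hc.start

/-- The orbit of `v` leaves the first projection of `P`, since otherwise it would be an injective
sequence in a finite type. -/
lemma exists_isMaximalChain_iterate [Finite V] (hsnd : Set.InjOn Prod.snd (P : Set (V × V)))
    {f : V → V} (hf : ∀ p ∈ P, f p.1 = p.2) {v : V} (hv : v ∉ P.image Prod.snd) :
    ∃ k, IsMaximalChain P (fun n => f^[n] v) k := by
  have hmem : ∀ n, f^[n] v ∈ P.image Prod.fst → (f^[n] v, f^[n + 1] v) ∈ P := by
    intro n hn
    obtain ⟨p, hp, hpn⟩ := mem_image.1 hn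
    rw [Function.iterate_succ_apply', ← hpn, hf p hp]
    exact hp
  have hexit : ∃ k, f^[k] v ∉ P.image Prod.fst := by
    by_contra! hall
    refine not_injective_infinite_finite (fun n => f^[n] v) fun a b hab => ?_
    exact injOn_Iic_of_chain (k := max a b) hsnd (fun n _ => hmem n (hall n)) hv
      (le_max_left a b) (le_max_right a b) hab
  exact ⟨Nat.find hexit, fun n hn => hmem n (not_not.1 (Nat.find_min hexit hn)), hv,
    Nat.find_spec hexit⟩

def chainPairs (x : ℕ → V) (k : ℕ) : Finset (V × V) :=
  (range k).image fun n => (x n, x (n + 1))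

lemma IsMaximalChain.chainPairs_subset (hc : IsMaximalChain P x k) : chainPairs x k ⊆ P := by
  intro p hp
  obtain ⟨n, hn, rfl⟩ := mem_image.1 hp
  exact hc.mem n (mem_range.1 hn)

lemma card_chainPairs (hx : Set.InjOn x (Set.Iic k)) : #(chainPairs x k) = k := by
  rw [chainPairs, card_image_of_injOn, card_range]
  rw [coe_range]
  exact (hx.mono Set.Iio_subset_Iic_self).of_comp (g := Prod.fst)

/-- `pairMate n = n ^^^ 1`, written so that `omega` can reason about it. -/
def pairMate (n : ℕ) : ℕ := if n % 2 = 0 then n + 1 else n - 1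

lemma pairMate_pairMate (n : ℕ) : pairMate (pairMate n) = n := by
  unfold pairMate; split_ifs <;> omega

lemma pairMate_lt_two_mul_iff {n j : ℕ} : pairMate n < 2 * j ↔ n < 2 * j := by
  unfold pairMate; split_ifs <;> omega

lemma pairMate_eq_succ_or_eq_succ_pairMate (n : ℕ) :
    pairMate n = n + 1 ∨ n = pairMate n + 1 := by
  unfold pairMate; split_ifs <;> omega

/-- The pairs `x 0 ↔ x 1`, `x 2 ↔ x 3`, …, `x (2j-2) ↔ x (2j-1)`, each in both directions. -/
def matePairs (x : ℕ → V) (j : ℕ) : Finset (V × V) :=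
  (range (2 * j)).image fun n => (x n, x (pairMate n))

variable {j : ℕ}

lemma injOn_fst_matePairs (hx : Set.InjOn x (Set.Iio (2 * j))) :
    Set.InjOn Prod.fst (matePairs x j : Set (V × V)) := by
  rw [matePairs, coe_image, coe_range]
  exact Set.InjOn.image_of_comp hx

lemma injOn_snd_matePairs (hx : Set.InjOn x (Set.Iio (2 * j))) :
    Set.InjOn Prod.snd (matePairs x j : Set (V × V)) := by
  rw [matePairs, coe_image, coe_range]
  refine Set.InjOn.image_of_comp (hx.comp ?_ fun n hn => pairMate_lt_two_mul_iff.2 hn)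
  exact (Function.LeftInverse.injective pairMate_pairMate).injOn

lemma card_matePairs (hx : Set.InjOn x (Set.Iio (2 * j))) : #(matePairs x j) = 2 * j := by
  rw [matePairs, card_image_of_injOn, card_range]
  rw [coe_range]
  exact Set.InjOn.of_comp (g := Prod.fst) hx

lemma mem_image_snd_matePairs {n : ℕ} (hn : n < 2 * j) : x n ∈ (matePairs x j).image Prod.snd :=
  mem_image.2 ⟨(x (pairMate n), x (pairMate (pairMate n))),
    mem_image.2 ⟨pairMate n, mem_range.2 (pairMate_lt_two_mul_iff.2 hn), rfl⟩,
    by rw [pairMate_pairMate]⟩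

def reroute (P : Finset (V × V)) (x : ℕ → V) (k j : ℕ) : Finset (V × V) :=
  (P \ chainPairs x k) ∪ matePairs x j

namespace IsMaximalChain

variable {p : V × V} {n : ℕ}

lemma fst_ne (hfst : Set.InjOn Prod.fst (P : Set (V × V))) (hc : IsMaximalChain P x k)
    (hp : p ∈ P \ chainPairs x k) (hn : n ≤ k) : p.1 ≠ x n := by
  obtain ⟨hpP, hpC⟩ := mem_sdiff.1 hp
  intro heq
  rcases hn.lt_or_eq with hlt | rfl
  · have hpair : p = (x n, x (n + 1)) := hfst hpP (hc.mem n hlt) heq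
    exact hpC (hpair ▸ mem_image.2 ⟨n, mem_range.2 hlt, rfl⟩)
  · exact hc.terminal (heq ▸ mem_image_of_mem Prod.fst hpP)

lemma snd_ne (hsnd : Set.InjOn Prod.snd (P : Set (V × V))) (hc : IsMaximalChain P x k)
    (hp : p ∈ P \ chainPairs x k) (hn : n ≤ k) : p.2 ≠ x n := by
  obtain ⟨hpP, hpC⟩ := mem_sdiff.1 hp
  intro heq
  cases n with
  | zero => exact hc.start (heq ▸ mem_image_of_mem Prod.snd hpP)
  | succ m =>
    have hpair : p = (x m, x (m + 1)) := hsnd hpP (hc.mem m hn) heq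
    exact hpC (hpair ▸ mem_image.2 ⟨m, mem_range.2 hn, rfl⟩)

lemma fst_ne_of_mem_matePairs (hfst : Set.InjOn Prod.fst (P : Set (V × V)))
    (hc : IsMaximalChain P x k) (hj : 2 * j ≤ k + 1) (hp : p ∈ P \ chainPairs x k) {q : V × V}
    (hq : q ∈ matePairs x j) : p.1 ≠ q.1 := by
  obtain ⟨n, hn, rfl⟩ := mem_image.1 hq
  exact hc.fst_ne hfst hp (by rw [mem_range] at hn; omega)

lemma snd_ne_of_mem_matePairs (hsnd : Set.InjOn Prod.snd (P : Set (V × V)))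
    (hc : IsMaximalChain P x k) (hj : 2 * j ≤ k + 1) (hp : p ∈ P \ chainPairs x k) {q : V × V}
    (hq : q ∈ matePairs x j) : p.2 ≠ q.2 := by
  obtain ⟨n, hn, rfl⟩ := mem_image.1 hq
  exact hc.snd_ne hsnd hp (by have := pairMate_lt_two_mul_iff.2 (mem_range.1 hn); omega)

lemma injOn_Iio_two_mul (hsnd : Set.InjOn Prod.snd (P : Set (V × V)))
    (hc : IsMaximalChain P x k) (hj : 2 * j ≤ k + 1) : Set.InjOn x (Set.Iio (2 * j)) :=
  (hc.injOn hsnd).mono fun n hn => Set.mem_Iic.2 (by rw [Set.mem_Iio] at hn; omega)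

lemma disjoint_sdiff_chainPairs_matePairs (hfst : Set.InjOn Prod.fst (P : Set (V × V)))
    (hc : IsMaximalChain P x k) (hj : 2 * j ≤ k + 1) :
    Disjoint (P \ chainPairs x k) (matePairs x j) :=
  disjoint_left.2 fun _ hp hq => hc.fst_ne_of_mem_matePairs hfst hj hp hq rfl

lemma injOn_fst_reroute (hfst : Set.InjOn Prod.fst (P : Set (V × V)))
    (hsnd : Set.InjOn Prod.snd (P : Set (V × V))) (hc : IsMaximalChain P x k)
    (hj : 2 * j ≤ k + 1) : Set.InjOn Prod.fst (reroute P x k j : Set (V × V)) := by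
  rw [reroute, coe_union, Set.injOn_union (disjoint_coe.2
    (hc.disjoint_sdiff_chainPairs_matePairs hfst hj))]
  exact ⟨hfst.mono (by simp), injOn_fst_matePairs (hc.injOn_Iio_two_mul hsnd hj),
    fun _ hp _ hq => hc.fst_ne_of_mem_matePairs hfst hj hp hq⟩

lemma injOn_snd_reroute (hfst : Set.InjOn Prod.fst (P : Set (V × V)))
    (hsnd : Set.InjOn Prod.snd (P : Set (V × V))) (hc : IsMaximalChain P x k)
    (hj : 2 * j ≤ k + 1) : Set.InjOn Prod.snd (reroute P x k j : Set (V × V)) := by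
  rw [reroute, coe_union, Set.injOn_union (disjoint_coe.2
    (hc.disjoint_sdiff_chainPairs_matePairs hfst hj))]
  exact ⟨hsnd.mono (by simp), injOn_snd_matePairs (hc.injOn_Iio_two_mul hsnd hj),
    fun _ hp _ hq => hc.snd_ne_of_mem_matePairs hsnd hj hp hq⟩

lemma card_reroute_add (hfst : Set.InjOn Prod.fst (P : Set (V × V)))
    (hsnd : Set.InjOn Prod.snd (P : Set (V × V))) (hc : IsMaximalChain P x k)
    (hj : 2 * j ≤ k + 1) : #(reroute P x k j) + k = #P + 2 * j := by
  rw [reroute, card_union_of_disjoint (hc.disjoint_sdiff_chainPairs_matePairs hfst hj),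
    card_matePairs (hc.injOn_Iio_two_mul hsnd hj),
    ← card_sdiff_add_card_eq_card hc.chainPairs_subset, card_chainPairs (hc.injOn hsnd)]
  ring

lemma adj_of_mem_reroute {G : SimpleGraph V} (hadj : ∀ p ∈ P, G.Adj p.1 p.2)
    (hc : IsMaximalChain P x k) (hj : 2 * j ≤ k + 1) :
    ∀ p ∈ reroute P x k j, G.Adj p.1 p.2 := by
  intro p hp
  rcases mem_union.1 hp with hp | hp
  · exact hadj p (mem_sdiff.1 hp).1
  · obtain ⟨n, hn, rfl⟩ := mem_image.1 hp
    have hn := mem_range.1 hn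
    have hn' := pairMate_lt_two_mul_iff.2 hn
    rcases pairMate_eq_succ_or_eq_succ_pairMate n with h | h
    · rw [h]
      exact hadj _ (hc.mem n (by omega))
    · have hedge := hadj _ (hc.mem (pairMate n) (by omega))
      rw [← h] at hedge
      exact hedge.symm

lemma image_fst_sdiff_image_snd_reroute_subset (hfst : Set.InjOn Prod.fst (P : Set (V × V)))
    (hc : IsMaximalChain P x k) :
    (reroute P x k j).image Prod.fst \ (reroute P x k j).image Prod.snd ⊆
      (P.image Prod.fst \ P.image Prod.snd).erase (x 0) := by
  intro v hv
  obtain ⟨hvfst, hvsnd⟩ := mem_sdiff.1 hv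
  obtain ⟨p, hpQ, rfl⟩ := mem_image.1 hvfst
  have hp : p ∈ P \ chainPairs x k := by
    refine (mem_union.1 hpQ).resolve_right fun hpM => ?_
    obtain ⟨n, hn, rfl⟩ := mem_image.1 hpM
    exact hvsnd (image_subset_image subset_union_right (mem_image_snd_matePairs (mem_range.1 hn)))
  refine mem_erase.2 ⟨hc.fst_ne hfst hp k.zero_le,
    mem_sdiff.2 ⟨mem_image_of_mem _ (mem_sdiff.1 hp).1, fun hpJ => ?_⟩⟩
  obtain ⟨q, hq, hqp⟩ := mem_image.1 hpJ
  by_cases hqC : q ∈ chainPairs x k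
  · obtain ⟨n, hn, rfl⟩ := mem_image.1 hqC
    exact hc.fst_ne hfst hp (mem_range.1 hn) hqp.symm
  · exact hvsnd (mem_image.2 ⟨q, mem_union_left _ (mem_sdiff.2 ⟨hq, hqC⟩), hqp⟩)

end IsMaximalChain

end PairFinset

section Term

variable {N : ℕ} {G : SimpleGraph (Fin N)} {P : Finset (Fin N × Fin N)}

lemma isTerm_iff : IsTerm N G P ↔ (∀ p ∈ P, G.Adj p.1 p.2) ∧
    Set.InjOn Prod.fst (P : Set (Fin N × Fin N)) ∧
      Set.InjOn Prod.snd (P : Set (Fin N × Fin N)) := by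
  simp only [IsTerm, card_image_iff]

lemma isTerm_image_filter_adj [DecidableRel G.Adj] (π : Equiv.Perm (Fin N)) :
    IsTerm N G ((univ.filter fun i => G.Adj i (π i)).image fun i => (i, π i)) := by
  refine isTerm_iff.2 ⟨?_, ?_, ?_⟩
  · simp
  · rw [coe_image]
    exact Set.InjOn.image_of_comp (Set.injOn_id _)
  · rw [coe_image]
    exact Set.InjOn.image_of_comp π.injective.injOn

lemma mpPerm_le_of_forall_isTerm [DecidableRel G.Adj] {t : ℕ}
    (h : ∀ Q, IsTerm N G Q → #Q ≤ t) : mpPerm N G ≤ t := by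
  refine Finset.sup_le fun π _ => ?_
  have hinj : Function.Injective fun i => (i, π i) := fun _ _ hij => congrArg Prod.fst hij
  rw [← card_filter, ← card_image_of_injective _ hinj]
  exact h _ (isTerm_image_filter_adj π)

lemma IsTerm.card_le_mpPerm [DecidableRel G.Adj] (hP : IsTerm N G P) : #P ≤ mpPerm N G := by
  obtain ⟨hadj, hfst, hsnd⟩ := isTerm_iff.1 hP
  obtain ⟨σ, hσ⟩ := exists_perm_apply_fst_eq_snd hfst hsnd
  calc #P = #(P.image Prod.fst) := hP.2.1.symm
    _ ≤ #(univ.filter fun i => G.Adj i (σ i)) := card_le_card fun i hi => by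
        obtain ⟨p, hp, rfl⟩ := mem_image.1 hi
        simpa [hσ p hp] using hadj p hp
    _ = ∑ i, if G.Adj i (σ i) then 1 else 0 := card_filter _ _
    _ ≤ mpPerm N G :=
        le_sup (f := fun π : Equiv.Perm (Fin N) => ∑ i, if G.Adj i (π i) then 1 else 0)
          (mem_univ σ)

lemma IsTerm.exists_card_eq_card_sdiff_lt (hP : IsTerm N G P)
    (hmax : ∀ Q, IsTerm N G Q → #Q ≤ #P) {v : Fin N}
    (hv : v ∈ P.image Prod.fst \ P.image Prod.snd) :
    ∃ Q, IsTerm N G Q ∧ #Q = #P ∧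
      #(Q.image Prod.fst \ Q.image Prod.snd) < #(P.image Prod.fst \ P.image Prod.snd) := by
  obtain ⟨hadj, hfst, hsnd⟩ := isTerm_iff.1 hP
  obtain ⟨σ, hσ⟩ := exists_perm_apply_fst_eq_snd hfst hsnd
  obtain ⟨k, hc⟩ := exists_isMaximalChain_iterate hsnd hσ (mem_sdiff.1 hv).2
  have hj : 2 * ((k + 1) / 2) ≤ k + 1 := by omega
  have hQ : IsTerm N G (reroute P _ k ((k + 1) / 2)) := isTerm_iff.2
    ⟨hc.adj_of_mem_reroute hadj hj, hc.injOn_fst_reroute hfst hsnd hj,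
      hc.injOn_snd_reroute hfst hsnd hj⟩
  -- maximality of `P` forces `k` to be even
  have hcard := hc.card_reroute_add hfst hsnd hj
  have hle := hmax _ hQ
  refine ⟨_, hQ, by omega, ?_⟩
  calc _ ≤ #((P.image Prod.fst \ P.image Prod.snd).erase v) :=
        card_le_card (hc.image_fst_sdiff_image_snd_reroute_subset hfst)
    _ < _ := card_erase_lt_of_mem hv

lemma IsTerm.exists_card_eq_image_fst_eq_image_snd (hP : IsTerm N G P)
    (hmax : ∀ Q, IsTerm N G Q → #Q ≤ #P) :
    ∃ Q, IsTerm N G Q ∧ #Q = #P ∧ Q.image Prod.fst = Q.image Prod.snd := by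
  classical
  obtain ⟨Q, hQmem, hmin⟩ := exists_min_image (univ.filter fun Q => IsTerm N G Q ∧ #Q = #P)
    (fun Q => #(Q.image Prod.fst \ Q.image Prod.snd)) ⟨P, by simp [hP]⟩
  obtain ⟨hQ, hQP⟩ := (mem_filter.1 hQmem).2
  refine ⟨Q, hQ, hQP, eq_of_subset_of_card_le ?_ (by rw [hQ.2.1, hQ.2.2])⟩
  rw [← sdiff_eq_empty_iff_subset, ← not_nonempty_iff_eq_empty]
  rintro ⟨v, hv⟩
  obtain ⟨Q', hQ', hQ'Q, hlt⟩ := hQ.exists_card_eq_card_sdiff_lt (hQP ▸ hmax) hv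
  exact (hmin Q' (by simp [hQ', hQ'Q, hQP])).not_gt hlt

end Term

theorem mpPerm_eq_max_term_and_exists_term_with_eq_supports
    (N : ℕ) (G : SimpleGraph (Fin N)) [DecidableRel G.Adj] (t : ℕ)
    (ht : IsGreatest {n : ℕ | ∃ P : Finset (Fin N × Fin N),
      IsTerm N G P ∧ P.card = n} t) :
    mpPerm N G = t ∧
      ∃ P : Finset (Fin N × Fin N), IsTerm N G P ∧ P.card = t ∧
        P.image Prod.fst = P.image Prod.snd := by
  obtain ⟨P, hP, rfl⟩ := ht.1
  have hmax : ∀ Q, IsTerm N G Q → #Q ≤ #P := fun Q hQ => ht.2 ⟨Q, hQ, rfl⟩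
  exact ⟨le_antisymm (mpPerm_le_of_forall_isTerm hmax) hP.card_le_mpPerm,
    hP.exists_card_eq_image_fst_eq_image_snd hmax⟩
end

section
/- Any 3-term P of maximal size in a simple graph G (i.e., G admits a 3-term but no 4-term) satisfies I(P) = J(P). -/
/-!
Read a term as a set of arcs `i → j` in which every vertex has in- and out-degree at most one.
If `I(P) ≠ J(P)`, there is an arc `p` leaving a vertex outside `J` and an arc `q` entering a
vertex outside `I`. An arc `r` with `r.1 ∉ J` and `r.2 ∉ I` can be added reversed, giving a
4-term; this applies to `r = p` if `p = q`, and to the third arc if `p, q` form a path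
`p.1 → p.2 = q.1 → q.2`. Otherwise `p` and `q` have four distinct endpoints, and the two
2-cycles `p, p.swap` and `q, q.swap` together form a 4-term.
-/

lemma Finset.exists_mem_image_notMem_image {α β : Type*} [DecidableEq β]
    {P : Finset α} {f g : α → β} (hcard : (P.image f).card = (P.image g).card)
    (hne : P.image f ≠ P.image g) :
    ∃ p ∈ P, f p ∉ P.image g := by
  obtain ⟨_, hx, hxg⟩ := Finset.not_subset.mp fun h =>
    hne (Finset.eq_of_subset_of_card_le h hcard.ge)
  obtain ⟨p, hp, rfl⟩ := Finset.mem_image.mp hx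
  exact ⟨p, hp, hxg⟩

section

variable {N : ℕ} {G : SimpleGraph (Fin N)} {P Q : Finset (Fin N × Fin N)}
  {p q r : Fin N × Fin N}

lemma IsTerm.injOn_fst (hP : IsTerm N G P) : Set.InjOn Prod.fst (P : Set (Fin N × Fin N)) :=
  Finset.card_image_iff.mp hP.2.1

lemma IsTerm.injOn_snd (hP : IsTerm N G P) : Set.InjOn Prod.snd (P : Set (Fin N × Fin N)) :=
  Finset.card_image_iff.mp hP.2.2

lemma IsTerm.union (hP : IsTerm N G P) (hQ : IsTerm N G Q)
    (hfst : Disjoint (P.image Prod.fst) (Q.image Prod.fst))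
    (hsnd : Disjoint (P.image Prod.snd) (Q.image Prod.snd)) :
    IsTerm N G (P ∪ Q) ∧ (P ∪ Q).card = P.card + Q.card := by
  have hcard := Finset.card_union_of_disjoint hfst.of_image_finset
  refine ⟨⟨?_, ?_, ?_⟩, hcard⟩
  · intro p hp
    rcases Finset.mem_union.mp hp with hp | hp
    exacts [hP.1 p hp, hQ.1 p hp]
  · rw [Finset.image_union, Finset.card_union_of_disjoint hfst, hP.2.1, hQ.2.1, hcard]
  · rw [Finset.image_union, Finset.card_union_of_disjoint hsnd, hP.2.2, hQ.2.2, hcard]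

lemma isTerm_singleton (hp : G.Adj p.1 p.2) : IsTerm N G {p} := by
  simp [IsTerm, hp]

lemma isTerm_pair_swap (hp : G.Adj p.1 p.2) :
    IsTerm N G {p, p.swap} ∧ ({p, p.swap} : Finset _).card = 2 := by
  have hne := G.ne_of_adj hp
  have hcard : ({p, p.swap} : Finset (Fin N × Fin N)).card = 2 :=
    Finset.card_pair fun h => hne (congrArg Prod.fst h)
  refine ⟨⟨?_, ?_, ?_⟩, hcard⟩
  · simpa using ⟨hp, hp.symm⟩
  · simpa [hcard] using Finset.card_pair hne
  · simpa [hcard] using Finset.card_pair hne.symm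

lemma isTerm_union_pair_swap (hp : G.Adj p.1 p.2) (hq : G.Adj q.1 q.2)
    (hpq : Disjoint ({p.1, p.2} : Finset (Fin N)) {q.1, q.2}) :
    IsTerm N G ({p, p.swap} ∪ {q, q.swap}) ∧
      ({p, p.swap} ∪ {q, q.swap} : Finset _).card = 4 := by
  obtain ⟨hP, hPcard⟩ := isTerm_pair_swap hp
  obtain ⟨hQ, hQcard⟩ := isTerm_pair_swap hq
  have h := hP.union hQ (by simpa using hpq) (by simpa [Finset.pair_comm] using hpq)
  exact ⟨h.1, by rw [h.2, hPcard, hQcard]⟩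

lemma IsTerm.insert_swap (hP : IsTerm N G P) (hr : r ∈ P)
    (hr₁ : r.1 ∉ P.image Prod.snd) (hr₂ : r.2 ∉ P.image Prod.fst) :
    IsTerm N G (insert r.swap P) ∧ (insert r.swap P).card = P.card + 1 := by
  have h := (isTerm_singleton (p := r.swap) (hP.1 r hr).symm).union hP
    (by simpa using hr₂) (by simpa using hr₁)
  rwa [← Finset.insert_eq, Finset.card_singleton, add_comm] at h

lemma IsTerm.exists_reversible_of_path (hP : IsTerm N G P) (hcard : P.card = 3)
    (hp : p ∈ P) (hq : q ∈ P) (hpq : p ≠ q)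
    (hp₁ : p.1 ∉ P.image Prod.snd) (hq₂ : q.2 ∉ P.image Prod.fst) (hpath : p.2 = q.1) :
    ∃ r ∈ P, r.1 ∉ P.image Prod.snd ∧ r.2 ∉ P.image Prod.fst := by
  obtain ⟨r, hr, hrp, hrq⟩ : ∃ r ∈ P, r ≠ p ∧ r ≠ q := by
    obtain ⟨r, hr⟩ : ((P.erase p).erase q).Nonempty := by
      rw [← Finset.card_pos, Finset.card_erase_of_mem (Finset.mem_erase.mpr ⟨hpq.symm, hq⟩),
        Finset.card_erase_of_mem hp, hcard]
      norm_num
    simp only [Finset.mem_erase] at hr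
    exact ⟨r, hr.2.2, hr.2.1, hr.1⟩
  have hr₁ : r.1 ∈ P.image Prod.fst := Finset.mem_image_of_mem _ hr
  have hr₂ : r.2 ∈ P.image Prod.snd := Finset.mem_image_of_mem _ hr
  have hP3 : P = {p, q, r} := by
    refine (Finset.eq_of_subset_of_card_le ?_ ?_).symm
    · simp [Finset.insert_subset_iff, hp, hq, hr]
    · rw [hcard, Finset.card_eq_three.mpr ⟨p, q, r, hpq, hrp.symm, hrq.symm, rfl⟩]
  have hrr := G.ne_of_adj (hP.1 r hr)
  refine ⟨r, hr, ?_, ?_⟩ <;> rw [hP3] <;>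
    simp only [Finset.image_insert, Finset.image_singleton, Finset.mem_insert,
      Finset.mem_singleton, not_or]
  · exact ⟨fun h => hrq (hP.injOn_fst hr hq (h.trans hpath)), fun h => hq₂ (h ▸ hr₁),
      hrr⟩
  · exact ⟨fun h => hp₁ (h ▸ hr₂), fun h => hrp (hP.injOn_snd hr hp (h.trans hpath.symm)),
      hrr.symm⟩

end

theorem three_term_maximal_eq_supports (N : ℕ) (G : SimpleGraph (Fin N))
    (P : Finset (Fin N × Fin N)) (hP : IsTerm N G P) (hcard : P.card = 3)
    (hmax : ¬ ∃ Q : Finset (Fin N × Fin N), IsTerm N G Q ∧ Q.card = 4) :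
    P.image Prod.fst = P.image Prod.snd := by
  have no_reversible :
      ∀ r ∈ P, r.1 ∉ P.image Prod.snd → r.2 ∉ P.image Prod.fst → False :=
    fun r hr hr₁ hr₂ => hmax ⟨_, by simpa [hcard] using hP.insert_swap hr hr₁ hr₂⟩
  by_contra hne
  have hIJ := hP.2.1.trans hP.2.2.symm
  obtain ⟨p, hp, hp₁⟩ := Finset.exists_mem_image_notMem_image hIJ hne
  obtain ⟨q, hq, hq₂⟩ := Finset.exists_mem_image_notMem_image hIJ.symm (Ne.symm hne)
  have hpq : p ≠ q := by
    rintro rfl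
    exact no_reversible p hp hp₁ hq₂
  by_cases hpath : p.2 = q.1
  · obtain ⟨r, hr, hr₁, hr₂⟩ :=
      hP.exists_reversible_of_path hcard hp hq hpq hp₁ hq₂ hpath
    exact no_reversible r hr hr₁ hr₂
  · have hdisj : Disjoint ({p.1, p.2} : Finset (Fin N)) {q.1, q.2} := by
      simp only [Finset.disjoint_insert_left, Finset.disjoint_singleton_left,
        Finset.mem_insert, Finset.mem_singleton, not_or]
      exact ⟨⟨fun h => hpq (hP.injOn_fst hp hq h),
        fun h => hq₂ (h ▸ Finset.mem_image_of_mem _ hp)⟩, hpath,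
        fun h => hpq (hP.injOn_snd hp hq h)⟩
    exact hmax ⟨_, isTerm_union_pair_swap (hP.1 p hp) (hP.1 q hq) hdisj⟩
end

section
/- For a simple graph G on N ≥ 2 vertices and distinct vertices i ≠ j, the covariance of A_{i,π(i)} and A_{j,π(j)} over a uniformly random permutation π equals (d_i d_j − N T_{i,j}) / (N²(N−1)), where T_{i,j} = ∑_k A_{i,k} A_{j,k} is the scalar product of rows i and j of A. -/
/-!
Under a uniform permutation `π`, the vertex `π i` is uniform on `Fin N` and, for `i ≠ j`, the pair
`(π i, π j)` is uniform on ordered pairs of distinct vertices. Hence `E[A i (π i)] = dᵢ / N` and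
`E[A i (π i) * A j (π j)] = (dᵢ dⱼ - T i j) / (N (N - 1))`, and the formula is algebra.
-/

/-- The `(x,y)` entry of the adjacency matrix of `G`, as a rational number. -/
def adjQ (N : ℕ) (G : SimpleGraph (Fin N)) [DecidableRel G.Adj] (x y : Fin N) : ℚ :=
  if G.Adj x y then 1 else 0

open Finset

namespace MulAction

variable {G β M : Type*} [Group G] [Fintype G] [MulAction G β] [AddCommMonoid M]

/-- Orbit–stabilizer counting for sums: `s` is the orbit of `x`, and every point of it is
`g • x` for exactly `|G| / #s` elements `g`. -/
theorem card_nsmul_sum_smul {s : Finset β} {x : β} (hs : ∀ (g : G), ∀ y ∈ s, g • y ∈ s)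
    (hx : ∀ y ∈ s, ∃ g : G, g • x = y) (F : β → M) :
    #s • ∑ g : G, F (g • x) = Fintype.card G • ∑ y ∈ s, F y := by
  have sum_smul_eq : ∀ y ∈ s, ∑ g : G, F (g • y) = ∑ g : G, F (g • x) := by
    intro y hy
    obtain ⟨h, rfl⟩ := hx y hy
    simpa [mul_smul] using Equiv.sum_comp (Equiv.mulRight h) (fun g => F (g • x))
  have sum_translate : ∀ g : G, ∑ y ∈ s, F (g • y) = ∑ y ∈ s, F y := fun g =>
    sum_nbij' (g • ·) (g⁻¹ • ·) (hs g) (hs g⁻¹) (fun y _ => inv_smul_smul g y)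
      (fun y _ => smul_inv_smul g y) fun _ _ => rfl
  calc #s • ∑ g : G, F (g • x) = ∑ y ∈ s, ∑ g : G, F (g • y) := by
        rw [sum_congr rfl sum_smul_eq, sum_const]
    _ = ∑ g : G, ∑ y ∈ s, F (g • y) := sum_comm
    _ = Fintype.card G • ∑ y ∈ s, F y := by
        rw [sum_congr rfl fun g _ => sum_translate g, sum_const, card_univ]

end MulAction

theorem Finset.sum_offDiag {α M : Type*} [DecidableEq α] [AddCommGroup M] (s : Finset α)
    (f : α → α → M) :
    ∑ p ∈ s.offDiag, f p.1 p.2 = ∑ a ∈ s, ∑ b ∈ s, f a b - ∑ a ∈ s, f a a := by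
  rw [eq_sub_iff_add_eq, ← sum_diag s (fun p => f p.1 p.2), add_comm,
    ← sum_union (disjoint_diag_offDiag s), diag_union_offDiag, sum_product]

namespace Equiv.Perm

theorem exists_apply_eq_and_apply_eq {α : Type*} [DecidableEq α] {i j a b : α} (hij : i ≠ j)
    (hab : a ≠ b) :
    ∃ τ : Perm α, τ i = a ∧ τ j = b := by
  refine ⟨swap (swap i a j) b * swap i a, ?_, by simp⟩
  have hja : swap i a j ≠ a := fun h =>
    hij ((swap i a).injective (h.trans (swap_apply_left i a).symm)).symm
  simp [swap_apply_of_ne_of_ne hja.symm hab]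

variable {α K : Type*} [Fintype α] [DecidableEq α] [Field K] [CharZero K]

theorem sum_apply_div_factorial (f : α → K) (i : α) :
    (∑ π : Perm α, f (π i)) / (Fintype.card α).factorial = (∑ a, f a) / Fintype.card α := by
  have key := MulAction.card_nsmul_sum_smul (G := Perm α) (s := univ) (x := i)
    (fun _ _ _ => mem_univ _) (fun y _ => ⟨swap i y, swap_apply_left i y⟩) f
  simp only [card_univ, Fintype.card_perm, nsmul_eq_mul] at key
  have hcard : (Fintype.card α : K) ≠ 0 := by
    exact_mod_cast (Fintype.card_pos_iff.2 ⟨i⟩).ne'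
  rw [div_eq_div_iff (Nat.cast_ne_zero.2 (Nat.factorial_ne_zero _)) hcard]
  linear_combination key

theorem sum_apply_apply_div_factorial (f : α → α → K) {i j : α} (hij : i ≠ j) :
    (∑ π : Perm α, f (π i) (π j)) / (Fintype.card α).factorial =
      (∑ p ∈ univ.offDiag, f p.1 p.2) / (Fintype.card α * (Fintype.card α - 1)) := by
  have key := MulAction.card_nsmul_sum_smul (G := Perm α) (s := univ.offDiag) (x := (i, j))
    (fun π p hp => by simpa [smul_def] using hp)
    (fun p hp => by
      obtain ⟨τ, hτi, hτj⟩ := exists_apply_eq_and_apply_eq hij (mem_offDiag.1 hp).2.2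
      exact ⟨τ, by simp [hτi, hτj]⟩)
    (fun p => f p.1 p.2)
  have hcard : 1 < Fintype.card α := Fintype.one_lt_card_iff.2 ⟨i, j, hij⟩
  simp only [Prod.smul_mk, offDiag_card, card_univ, Fintype.card_perm, nsmul_eq_mul] at key
  rw [Nat.cast_sub (Nat.le_mul_self _), Nat.cast_mul] at key
  have hcard₀ : (Fintype.card α : K) ≠ 0 := by exact_mod_cast (zero_lt_one.trans hcard).ne'
  have hcard₁ : (Fintype.card α : K) - 1 ≠ 0 := sub_ne_zero.2 (by exact_mod_cast hcard.ne')
  rw [div_eq_div_iff (Nat.cast_ne_zero.2 (Nat.factorial_ne_zero _)) (mul_ne_zero hcard₀ hcard₁)]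
  linear_combination key

end Equiv.Perm

theorem sum_adjQ_eq_degree (N : ℕ) (G : SimpleGraph (Fin N)) [DecidableRel G.Adj] (i : Fin N) :
    ∑ k, adjQ N G i k = G.degree i := by
  simp only [adjQ, sum_boole, SimpleGraph.degree, SimpleGraph.neighborFinset_eq_filter]

theorem covariance_formula (N : ℕ) (hN : 2 ≤ N) (G : SimpleGraph (Fin N))
    [DecidableRel G.Adj] (i j : Fin N) (hij : i ≠ j) :
    (∑ π : Equiv.Perm (Fin N), adjQ N G i (π i) * adjQ N G j (π j)) /
          (Nat.factorial N : ℚ) -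
        ((∑ π : Equiv.Perm (Fin N), adjQ N G i (π i)) / (Nat.factorial N : ℚ)) *
          ((∑ π : Equiv.Perm (Fin N), adjQ N G j (π j)) / (Nat.factorial N : ℚ)) =
      ((G.degree i : ℚ) * (G.degree j : ℚ) -
          (N : ℚ) * ∑ k, adjQ N G i k * adjQ N G j k) /
        ((N : ℚ) ^ 2 * ((N : ℚ) - 1)) := by
  have hN₁ : (N : ℚ) - 1 ≠ 0 := by
    have : (2 : ℚ) ≤ N := by exact_mod_cast hN
    linarith
  have hpair :=
    Equiv.Perm.sum_apply_apply_div_factorial (fun a b => adjQ N G i a * adjQ N G j b) hij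
  have hi := Equiv.Perm.sum_apply_div_factorial (adjQ N G i) i
  have hj := Equiv.Perm.sum_apply_div_factorial (adjQ N G j) j
  rw [Fintype.card_fin] at hpair hi hj
  rw [hpair, hi, hj, sum_offDiag univ fun a b => adjQ N G i a * adjQ N G j b, ← sum_mul_sum,
    sum_adjQ_eq_degree, sum_adjQ_eq_degree]
  field_simp
  ring
end

section
/- For a simple graph G on N ≥ 2 vertices with complement G^c, the variances of S_N for G^c and G satisfy Var(H_{G^c}) = Var(H_G) + 1 − 2·E(H_G)/(N−1), where E(H_G) = 2ℓ_G/N. -/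
/-- The mean of `S_N(π) = ∑_i (A_G)_{i,π(i)}` over a uniformly random permutation. -/
def meanQ (N : ℕ) (G : SimpleGraph (Fin N)) [DecidableRel G.Adj] : ℚ :=
  (∑ π : Equiv.Perm (Fin N), ∑ i, if G.Adj i (π i) then (1 : ℚ) else 0) /
    (Nat.factorial N : ℚ)

/-- The variance of `S_N(π)` over a uniformly random permutation. -/
def varQ (N : ℕ) (G : SimpleGraph (Fin N)) [DecidableRel G.Adj] : ℚ :=
  (∑ π : Equiv.Perm (Fin N), (∑ i, if G.Adj i (π i) then (1 : ℚ) else 0) ^ 2) /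
      (Nat.factorial N : ℚ) - (meanQ N G) ^ 2

/-!
For `π i ≠ i` the pair `(i, π i)` is an edge of exactly one of `G`, `Gᶜ`, so
`S_{Gᶜ} = N - F - S_G` where `F` counts the fixed points of `π`. Hence
`Var S_{Gᶜ} = Var F + Var S_G + 2 Cov(F, S_G)`.
Since the symmetric group acts transitively on points and on ordered pairs of distinct points,
`π i` is uniform and `(π i, π j)` is uniform on distinct pairs; this gives `E F = 1`,
`E F² = 2` and `E[F S_G] = (N - 2)/(N - 1) · E S_G`, i.e. `Var F = 1` and
`Cov(F, S_G) = -E S_G / (N - 1)`.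
-/

open Finset
open scoped BigOperators

variable {K : Type*} [Field K] [CharZero K]

theorem MulAction.expect_boole_smul_eq {G X : Type*} [Group G] [MulAction G X] [Fintype G]
    [Fintype X] [DecidableEq X] [IsPretransitive G X] (x y : X) :
    𝔼 g : G, (if g • x = y then (1 : K) else 0) = (Fintype.card X : K)⁻¹ := by
  -- left translation permutes the fibres of `g ↦ g • x` transitively, and they partition `G`
  have hconst : ∀ y', 𝔼 g : G, (if g • x = y' then (1 : K) else 0)
      = 𝔼 g : G, (if g • x = y then (1 : K) else 0) := by
    intro y'
    obtain ⟨h, rfl⟩ := exists_smul_eq G y y'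
    exact (Fintype.expect_equiv (Equiv.mulLeft h) _ _ fun g => by simp [mul_smul]).symm
  have htotal : ∑ y', 𝔼 g : G, (if g • x = y' then (1 : K) else 0) = 1 := by
    rw [← expect_sum_comm]
    simp
  rw [Fintype.sum_congr _ _ hconst, sum_const, card_univ, nsmul_eq_mul] at htotal
  exact eq_inv_of_mul_eq_one_right htotal

variable {α : Type*} [Fintype α] [DecidableEq α]

namespace Equiv.Perm

theorem expect_boole_apply_eq (i k : α) :
    𝔼 π : Perm α, (if π i = k then (1 : K) else 0) = (Fintype.card α : K)⁻¹ :=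
  MulAction.expect_boole_smul_eq i k

theorem expect_boole_apply_eq_and_apply_eq {i j k l : α} (hij : i ≠ j) (hkl : k ≠ l) :
    𝔼 π : Perm α, (if π i = k ∧ π j = l then (1 : K) else 0)
      = ((Fintype.card α : K) * (Fintype.card α - 1))⁻¹ := by
  have := isMultiplyPretransitive α 2
  have hsmul : ∀ π : Perm α, π • Function.Embedding.embFinTwo hij
      = Function.Embedding.embFinTwo hkl ↔ π i = k ∧ π j = l := by
    intro π
    simp [DFunLike.ext_iff, Fin.forall_fin_two, Function.Embedding.smul_apply,
      Function.Embedding.embFinTwo_apply_zero, Function.Embedding.embFinTwo_apply_one]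
  have hn : 1 ≤ Fintype.card α := Fintype.card_pos_iff.mpr ⟨i⟩
  simp_rw [← hsmul]
  rw [MulAction.expect_boole_smul_eq, Fintype.card_embedding_eq, Fintype.card_fin,
    Nat.descFactorial_succ, Nat.descFactorial_one]
  push_cast [hn]
  ring

theorem sum_apply_eq_sum_mul_boole {R : Type*} [NonAssocSemiring R] (a : α → α → R)
    (π : Perm α) :
    ∑ i, a i (π i) = ∑ i, ∑ k, a i k * if π i = k then 1 else 0 := by
  simp only [mul_boole, sum_ite_eq, mem_univ, if_true]

theorem expect_sum_apply (a : α → α → K) :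
    𝔼 π : Perm α, ∑ i, a i (π i) = (∑ i, ∑ k, a i k) / Fintype.card α := by
  simp_rw [sum_apply_eq_sum_mul_boole, expect_sum_comm, ← mul_expect, expect_boole_apply_eq,
    sum_div, div_eq_mul_inv]

theorem expect_card_fixed [Nonempty α] : 𝔼 π : Perm α, (#{i | π i = i} : K) = 1 := by
  simp_rw [natCast_card_filter, expect_sum_comm, expect_boole_apply_eq, sum_const, card_univ,
    nsmul_eq_mul]
  exact mul_inv_cancel₀ (Nat.cast_ne_zero.mpr Fintype.card_ne_zero)

theorem expect_card_fixed_mul_boole_eq_sum (i k : α) :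
    𝔼 π : Perm α, (#{j | π j = j} : K) * (if π i = k then 1 else 0)
      = ∑ j, 𝔼 π : Perm α, if π j = j ∧ π i = k then (1 : K) else 0 := by
  simp_rw [natCast_card_filter, sum_mul, ite_zero_mul_ite_zero, mul_one, expect_sum_comm]

theorem expect_card_fixed_mul_boole_of_ne {i k : α} (hik : i ≠ k) :
    𝔼 π : Perm α, (#{j | π j = j} : K) * (if π i = k then 1 else 0)
      = (Fintype.card α - 2) / (Fintype.card α * (Fintype.card α - 1)) := by
  have hcard : 2 ≤ Fintype.card α := Fintype.one_lt_card_iff.mpr ⟨i, k, hik⟩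
  have hzero : ∀ j ∈ univ, j ∉ univ \ {i, k} →
      𝔼 π : Perm α, (if π j = j ∧ π i = k then (1 : K) else 0) = 0 := by
    intro j _ hj
    refine Finset.expect_eq_zero fun π _ => if_neg ?_
    rintro ⟨hπj, hπi⟩
    rcases (by simpa [or_iff_not_imp_left] using hj : j = i ∨ j = k) with rfl | rfl
    · exact hik (hπj.symm.trans hπi)
    · exact hik (π.injective (hπi.trans hπj.symm))
  have hrest : ∀ j ∈ univ \ {i, k},
      𝔼 π : Perm α, (if π j = j ∧ π i = k then (1 : K) else 0)
        = ((Fintype.card α : K) * (Fintype.card α - 1))⁻¹ := by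
    intro j hj
    obtain ⟨hji, hjk⟩ : j ≠ i ∧ j ≠ k := by simpa using hj
    exact expect_boole_apply_eq_and_apply_eq hji hjk
  rw [expect_card_fixed_mul_boole_eq_sum, ← sum_subset (subset_univ _) hzero,
    sum_congr rfl hrest, sum_const, card_sdiff_of_subset (subset_univ _), card_pair hik,
    card_univ, nsmul_eq_mul, Nat.cast_sub hcard, div_eq_mul_inv]
  norm_num

theorem expect_card_fixed_mul_boole_self (hα : 2 ≤ Fintype.card α) (i : α) :
    𝔼 π : Perm α, (#{j | π j = j} : K) * (if π i = i then 1 else 0)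
      = 2 / Fintype.card α := by
  have hrest : ∀ j ∈ univ.erase i,
      𝔼 π : Perm α, (if π j = j ∧ π i = i then (1 : K) else 0)
        = ((Fintype.card α : K) * (Fintype.card α - 1))⁻¹ :=
    fun j hj => expect_boole_apply_eq_and_apply_eq (ne_of_mem_erase hj) (ne_of_mem_erase hj)
  have hn : (Fintype.card α : K) - 1 ≠ 0 := by
    rw [sub_ne_zero]; exact_mod_cast (by omega : Fintype.card α ≠ 1)
  rw [expect_card_fixed_mul_boole_eq_sum, ← add_sum_erase _ _ (mem_univ i),
    sum_congr rfl hrest, sum_const, card_erase_of_mem (mem_univ i), card_univ, nsmul_eq_mul,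
    Nat.cast_sub (by omega : 1 ≤ Fintype.card α)]
  simp only [and_self, expect_boole_apply_eq, Nat.cast_one]
  field_simp
  ring

theorem expect_card_fixed_sq (hα : 2 ≤ Fintype.card α) :
    𝔼 π : Perm α, (#{i | π i = i} : K) ^ 2 = 2 := by
  have hsq : ∀ π : Perm α, (#{i | π i = i} : K) ^ 2
      = ∑ i, (#{j | π j = j} : K) * (if π i = i then 1 else 0) := by
    intro π
    rw [← mul_sum, ← natCast_card_filter, sq]
  simp_rw [hsq, expect_sum_comm, expect_card_fixed_mul_boole_self hα, sum_const, card_univ,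
    nsmul_eq_mul]
  have : (Fintype.card α : K) ≠ 0 := Nat.cast_ne_zero.mpr (by omega)
  field_simp

theorem expect_card_fixed_mul_sum_apply (a : α → α → K) (ha : ∀ i, a i i = 0) :
    𝔼 π : Perm α, (#{j | π j = j} : K) * ∑ i, a i (π i)
      = (Fintype.card α - 2) / (Fintype.card α - 1) * 𝔼 π : Perm α, ∑ i, a i (π i) := by
  have hterm : ∀ i k,
      a i k * 𝔼 π : Perm α, (#{j | π j = j} : K) * (if π i = k then 1 else 0)
        = a i k * ((Fintype.card α - 2) / (Fintype.card α * (Fintype.card α - 1))) := by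
    intro i k
    obtain rfl | hik := eq_or_ne i k
    · simp [ha]
    · rw [expect_card_fixed_mul_boole_of_ne hik]
  rw [expect_sum_apply]
  simp_rw [sum_apply_eq_sum_mul_boole, mul_sum, expect_sum_comm, mul_left_comm _ (a _ _),
    ← mul_expect, hterm, ← sum_mul, ← div_div]
  ring

end Equiv.Perm

theorem SimpleGraph.sum_boole_compl_adj_apply {R : Type*} [Ring R] (G : SimpleGraph α)
    [DecidableRel G.Adj] (π : Equiv.Perm α) :
    ∑ i, (if Gᶜ.Adj i (π i) then (1 : R) else 0)
      = Fintype.card α - #{i | π i = i} - ∑ i, if G.Adj i (π i) then 1 else 0 := by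
  have hpoint : ∀ i, (if Gᶜ.Adj i (π i) then (1 : R) else 0)
      = 1 - (if π i = i then 1 else 0) - if G.Adj i (π i) then 1 else 0 := by
    intro i
    by_cases hfix : π i = i
    · simp [hfix]
    · by_cases hadj : G.Adj i (π i) <;> simp [hfix, hadj, Ne.symm hfix]
  simp_rw [hpoint, sum_sub_distrib, natCast_card_filter, sum_const, card_univ, nsmul_one]

theorem Fintype.expect_sq_sub_sq_expect_const_sub_sub {ι : Type*} [Fintype ι] [Nonempty ι]
    (c : K) (f g : ι → K) :
    𝔼 i, (c - f i - g i) ^ 2 - (𝔼 i, (c - f i - g i)) ^ 2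
      = (𝔼 i, f i ^ 2 - (𝔼 i, f i) ^ 2) + (𝔼 i, g i ^ 2 - (𝔼 i, g i) ^ 2)
        + 2 * (𝔼 i, f i * g i - (𝔼 i, f i) * 𝔼 i, g i) := by
  have hsq : ∀ i, (c - f i - g i) ^ 2
      = c ^ 2 - 2 * c * f i - 2 * c * g i + f i ^ 2 + g i ^ 2 + 2 * (f i * g i) := by
    intro i; ring
  simp_rw [hsq, expect_add_distrib, expect_sub_distrib, ← mul_expect, expect_const]
  ring

theorem meanQ_eq_expect (N : ℕ) (G : SimpleGraph (Fin N)) [DecidableRel G.Adj] :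
    meanQ N G = 𝔼 π : Equiv.Perm (Fin N), ∑ i, if G.Adj i (π i) then (1 : ℚ) else 0 := by
  rw [meanQ, Fintype.expect_eq_sum_div_card, Fintype.card_perm, Fintype.card_fin]

theorem varQ_eq_expect (N : ℕ) (G : SimpleGraph (Fin N)) [DecidableRel G.Adj] :
    varQ N G = 𝔼 π : Equiv.Perm (Fin N), (∑ i, if G.Adj i (π i) then (1 : ℚ) else 0) ^ 2
      - (𝔼 π : Equiv.Perm (Fin N), ∑ i, if G.Adj i (π i) then (1 : ℚ) else 0) ^ 2 := by
  simp only [varQ, meanQ, Fintype.expect_eq_sum_div_card, Fintype.card_perm, Fintype.card_fin]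

theorem variance_compl (N : ℕ) (hN : 2 ≤ N) (G : SimpleGraph (Fin N))
    [DecidableRel G.Adj] :
    varQ N Gᶜ = varQ N G + 1 - 2 * meanQ N G / ((N : ℚ) - 1) := by
  have hcard : 2 ≤ Fintype.card (Fin N) := by simpa using hN
  have : Nonempty (Fin N) := ⟨⟨0, by omega⟩⟩
  have hN1 : (N : ℚ) - 1 ≠ 0 := by
    rw [sub_ne_zero]; exact_mod_cast (by omega : N ≠ 1)
  simp_rw [varQ_eq_expect, meanQ_eq_expect, SimpleGraph.sum_boole_compl_adj_apply]
  rw [Fintype.expect_sq_sub_sq_expect_const_sub_sub, Equiv.Perm.expect_card_fixed,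
    Equiv.Perm.expect_card_fixed_sq hcard,
    Equiv.Perm.expect_card_fixed_mul_sum_apply (fun i k => if G.Adj i k then 1 else 0)
      fun _ => if_neg G.irrefl,
    Fintype.card_fin]
  field_simp
  ring
end

section
/- For a simple graph G on N vertices, the mp-chart value h_{G^c}(j) (number of permutations π with ∑_s (A_{G^c})_{s,π(s)} = j) equals ∑_{i=0}^{N−j} (M_G)_{i, N−j−i}, where (M_G)_{i,k} counts permutations with exactly i fixed points and ∑_s (A_G)_{s,π(s)} = k. -/
/-- `M_G i k` : the number of permutations `π` with exactly `i` fixed points and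
`∑_s (A_G)_{s,π(s)} = k`. -/
def MG (N : ℕ) (G : SimpleGraph (Fin N)) [DecidableRel G.Adj] (i k : ℕ) : ℕ :=
  (Finset.univ.filter fun π : Equiv.Perm (Fin N) =>
    (Finset.univ.filter fun s => π s = s).card = i ∧
      (∑ s, if G.Adj s (π s) then (1 : ℕ) else 0) = k).card

/-- `h_G k` : the number of permutations `π` with `∑_s (A_G)_{s,π(s)} = k`. -/
def hG (N : ℕ) (G : SimpleGraph (Fin N)) [DecidableRel G.Adj] (k : ℕ) : ℕ :=
  (Finset.univ.filter fun π : Equiv.Perm (Fin N) =>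
    (∑ s, if G.Adj s (π s) then (1 : ℕ) else 0) = k).card

theorem mpChart_compl (N : ℕ) (G : SimpleGraph (Fin N)) [DecidableRel G.Adj]
    (j : ℕ) (hj : j ≤ N) :
    hG N Gᶜ j = ∑ i ∈ Finset.range (N - j + 1), MG N G i (N - j - i) := by
  classical
  have key : ∀ π : Equiv.Perm (Fin N),
      (Finset.univ.filter fun s => π s = s).card
        + (∑ s, if G.Adj s (π s) then (1 : ℕ) else 0)
        + (∑ s, if Gᶜ.Adj s (π s) then (1 : ℕ) else 0) = N := by
    intro π
    rw [Finset.card_filter, ← Finset.sum_add_distrib, ← Finset.sum_add_distrib]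
    have h1 : ∀ s ∈ (Finset.univ : Finset (Fin N)),
        ((if π s = s then (1:ℕ) else 0) + (if G.Adj s (π s) then 1 else 0))
          + (if Gᶜ.Adj s (π s) then 1 else 0) = 1 := by
      intro s _
      by_cases h : π s = s
      · simp [h]
      · by_cases h2 : G.Adj s (π s)
        · have : ¬ Gᶜ.Adj s (π s) := by simp [SimpleGraph.compl_adj, h2]
          simp [h, h2, this]
        · have : Gᶜ.Adj s (π s) := by
            exact ⟨fun e => h e.symm, h2⟩
          simp [h, h2, this]
    rw [Finset.sum_congr rfl h1]
    simp
  unfold hG MG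
  rw [← Finset.card_biUnion]
  · congr 1
    ext π
    simp only [Finset.mem_biUnion, Finset.mem_range, Finset.mem_filter, Finset.mem_univ,
      true_and]
    constructor
    · intro h
      have hk := key π
      exact ⟨(Finset.univ.filter fun s => π s = s).card, by omega, rfl, by omega⟩
    · rintro ⟨i, hi, hfix, ha⟩
      have hk := key π
      omega
  · intro i _ k _ hik
    simp only [Finset.disjoint_left, Finset.mem_filter, Finset.mem_univ, true_and]
    rintro π ⟨h1, -⟩ ⟨h2, -⟩
    exact hik (h1 ▸ h2 ▸ rfl)
end
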